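/- arXiv:math/0102076 — 3 statements merged into one kernel-verified Lean document; each statement's English description precedes it below -/
import Mathlib

section
/- Let V be an idempotent b-space over a b-complete idempotent semifield and let W ⊆ V be a wo-closed subsemigroup. Then for any subset X ⊆ W bounded above in V, the supremum ⊕X (taken in V) belongs to W. In particular, every wo-closed subspace of V is b-closed. -/
/-- An idempotent commutative semigroup. -/
structure IdemSemigroup (S : Type*) where
  add : S → S → S
  add_comm : ∀ x y, add x y = add y x
  add_assoc : ∀ x y z, add (add x y) z = add x (add y z)
  add_idem : ∀ x, add x x = x

namespace IdemSemigroup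
variable {S : Type*}

/-- The canonical order: x ≼ y iff x ⊕ y = y. -/
def le (A : IdemSemigroup S) (x y : S) : Prop := A.add x y = y
def UB (A : IdemSemigroup S) (X : Set S) (b : S) : Prop := ∀ x ∈ X, A.le x b
def LB (A : IdemSemigroup S) (X : Set S) (b : S) : Prop := ∀ x ∈ X, A.le b x
def IsSup (A : IdemSemigroup S) (X : Set S) (s : S) : Prop :=
  A.UB X s ∧ ∀ b, A.UB X b → A.le s b
def IsInf (A : IdemSemigroup S) (X : Set S) (s : S) : Prop :=
  A.LB X s ∧ ∀ b, A.LB X b → A.le b s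
/-- b-completeness: every subset bounded above (including ∅) has a least upper bound. -/
def BComplete (A : IdemSemigroup S) : Prop :=
  ∀ X : Set S, (∃ b, A.UB X b) → ∃ s, A.IsSup X s
/-- Linearly ordered subset. -/
def Chain (A : IdemSemigroup S) (X : Set S) : Prop :=
  ∀ x ∈ X, ∀ y ∈ X, A.le x y ∨ A.le y x

end IdemSemigroup

/-- An idempotent semifield: idempotent semiring with all nonzero elements invertible. -/
structure IdemSemifield (K : Type*) extends IdemSemigroup K where
  mul : K → K → K
  one : K
  zero : K
  mul_assoc : ∀ x y z, mul (mul x y) z = mul x (mul y z)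
  one_mul : ∀ x, mul one x = x
  mul_one : ∀ x, mul x one = x
  zero_add : ∀ x, add zero x = x
  zero_mul : ∀ x, mul zero x = zero
  mul_zero : ∀ x, mul x zero = zero
  left_distrib : ∀ x y z, mul x (add y z) = add (mul x y) (mul x z)
  right_distrib : ∀ x y z, mul (add x y) z = add (mul x z) (mul y z)
  inv_exists : ∀ x, x ≠ zero → ∃ y, mul x y = one ∧ mul y x = one

namespace IdemSemifield
variable {K : Type*}
def BComplete (F : IdemSemifield K) : Prop := F.toIdemSemigroup.BComplete
def pow (F : IdemSemifield K) (x : K) : ℕ → K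
  | 0 => F.one
  | n + 1 => F.mul x (F.pow x n)
/-- Algebraically closed: n-th roots exist. -/
def AlgClosed (F : IdemSemifield K) : Prop :=
  ∀ x : K, ∀ n : ℕ, 0 < n → ∃ y, F.pow y n = x
end IdemSemifield

/-- An idempotent semimodule over an idempotent semifield. -/
structure IdemSemimodule {K : Type*} (F : IdemSemifield K) (V : Type*) extends
    IdemSemigroup V where
  smul : K → V → V
  zero : V
  zero_add : ∀ x, add zero x = x
  smul_smul : ∀ a b x, smul a (smul b x) = smul (F.mul a b) x
  add_smul : ∀ a b x, smul (F.add a b) x = add (smul a x) (smul b x)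
  smul_add : ∀ a x y, smul a (add x y) = add (smul a x) (smul a y)
  zero_smul : ∀ x, smul F.zero x = zero
  one_smul : ∀ x, smul F.one x = x

/-- An idempotent b-space: b-complete semimodule, scalar multiplication compatible
with bounded sups and infs of scalars. -/
structure IdemBSpace {K : Type*} (F : IdemSemifield K) (V : Type*) extends
    IdemSemimodule F V where
  bcomplete : toIdemSemigroup.BComplete
  smul_sup : ∀ (Q : Set K) (x : V) (s : K), Q.Nonempty →
    F.toIdemSemigroup.IsSup Q s →
    toIdemSemigroup.IsSup ((fun a => smul a x) '' Q) (smul s x)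
  smul_inf : ∀ (Q : Set K) (x : V) (s : K), Q.Nonempty →
    (∃ b, F.toIdemSemigroup.UB Q b) →
    F.toIdemSemigroup.IsInf Q s →
    toIdemSemigroup.IsInf ((fun a => smul a x) '' Q) (smul s x)

namespace IdemBSpace
variable {K V : Type*} {F : IdemSemifield K}

def le (B : IdemBSpace F V) (x y : V) : Prop := B.toIdemSemigroup.le x y
def IsSup (B : IdemBSpace F V) (X : Set V) (s : V) : Prop := B.toIdemSemigroup.IsSup X s
def IsInf (B : IdemBSpace F V) (X : Set V) (s : V) : Prop := B.toIdemSemigroup.IsInf X s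
def Chain (B : IdemBSpace F V) (X : Set V) : Prop := B.toIdemSemigroup.Chain X

def Subspace (B : IdemBSpace F V) (W : Set V) : Prop :=
  (∀ x ∈ W, ∀ y ∈ W, B.add x y ∈ W) ∧ (∀ (a : K), ∀ x ∈ W, B.smul a x ∈ W)

/-- wo-closed: sups of bounded linearly ordered subsets and infs of nonempty linearly
ordered subsets (taken in V) belong to the set. -/
def WOClosed (B : IdemBSpace F V) (M : Set V) : Prop :=
  ∀ X ⊆ M, B.Chain X →
    (∀ s, B.IsSup X s → s ∈ M) ∧ (∀ s, X.Nonempty → B.IsInf X s → s ∈ M)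

/-- Archimedean element. -/
def ArchElem (B : IdemBSpace F V) (x : V) : Prop :=
  ∀ y, ∃ a : K, B.le y (B.smul a x)

/-- f is the functional x*: x*(y) = inf { k | k ⊙ x ≽ y }. -/
def IsStar (B : IdemBSpace F V) (x : V) (f : V → K) : Prop :=
  ∀ y, F.toIdemSemigroup.IsInf {k | B.le y (B.smul k x)} (f y)

/-- wo-continuity of the functional f: it preserves sups and infs of bounded
linearly ordered subsets. -/
def WOContStar (B : IdemBSpace F V) (f : V → K) : Prop :=
  (∀ X : Set V, B.Chain X → ∀ s, B.IsSup X s → F.toIdemSemigroup.IsSup (f '' X) (f s)) ∧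
  (∀ X : Set V, B.Chain X → X.Nonempty → ∀ s, B.IsInf X s →
    F.toIdemSemigroup.IsInf (f '' X) (f s))

/-- wo-continuous element: its star functional is wo-continuous. -/
def WOContElem (B : IdemBSpace F V) (x : V) : Prop :=
  ∃ f, B.IsStar x f ∧ B.WOContStar f

/-- Archimedean space: contains a wo-continuous Archimedean element. -/
def ArchSpace (B : IdemBSpace F V) : Prop :=
  ∃ x, B.ArchElem x ∧ B.WOContElem x

/-- The subspace W, with the induced structure, is an Archimedean space. -/
def ArchOn (B : IdemBSpace F V) (W : Set V) : Prop :=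
  ∃ x ∈ W, (∀ y ∈ W, ∃ a : K, B.le y (B.smul a x)) ∧
    ∃ f : V → K,
      (∀ y ∈ W, F.toIdemSemigroup.IsInf {k | B.le y (B.smul k x)} (f y)) ∧
      (∀ X ⊆ W, B.Chain X → ∀ s ∈ W, B.IsSup X s →
        F.toIdemSemigroup.IsSup (f '' X) (f s)) ∧
      (∀ X ⊆ W, B.Chain X → X.Nonempty → ∀ s ∈ W, B.IsInf X s →
        F.toIdemSemigroup.IsInf (f '' X) (f s))

/-- b-linear map of the space into itself. -/
def BLinearMap (B : IdemBSpace F V) (g : V → V) : Prop :=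
  (∀ x y, g (B.add x y) = B.add (g x) (g y)) ∧
  (∀ (a : K) x, g (B.smul a x) = B.smul a (g x)) ∧
  (∀ (X : Set V) s, B.IsSup X s → B.IsSup (g '' X) (g s))

/-- b-linear functional. -/
def BLinearFun (B : IdemBSpace F V) (f : V → K) : Prop :=
  (∀ x y, f (B.add x y) = F.add (f x) (f y)) ∧
  (∀ (a : K) x, f (B.smul a x) = F.mul a (f x)) ∧
  (∀ (X : Set V) s, B.IsSup X s → F.toIdemSemigroup.IsSup (f '' X) (f s))

/-- ∧-subspace: closed under scalar multiplication and infima of nonempty subsets. -/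
def WedgeSub (B : IdemBSpace F V) (W : Set V) : Prop :=
  (∀ (a : K), ∀ x ∈ W, B.smul a x ∈ W) ∧
  (∀ X ⊆ W, X.Nonempty → ∃ s ∈ W, (∀ x ∈ X, B.le s x) ∧
    ∀ b ∈ W, (∀ x ∈ X, B.le b x) → B.le b s)

end IdemBSpace

/-- Bounded upper semicontinuous maps X → K. -/
def USCset {K : Type*} (F : IdemSemifield K) (X : Type*) [TopologicalSpace X] :
    Set (X → K) :=
  {f | (∃ b, ∀ t, F.toIdemSemigroup.le (f t) b) ∧
    ∀ b, IsClosed {t | F.toIdemSemigroup.le b (f t)}}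

/-!
Zorn's lemma, applied to the elements of `W` below `s = ⊕X` (chains there have their
suprema in `W` by wo-closedness), gives a maximal such element `m`. For `x ∈ X` the
element `m ⊕ x` is again in `W` and below `s`, so maximality forces `x ≼ m`; hence
`m` bounds `X` and `s = m ∈ W`.
-/

namespace IdemSemigroup

variable {S : Type*} (A : IdemSemigroup S)

theorem le_refl (x : S) : A.le x x := A.add_idem x

variable {A}

theorem le_trans {x y z : S} (hxy : A.le x y) (hyz : A.le y z) : A.le x z := by
  unfold IdemSemigroup.le at *
  rw [← hyz, ← A.add_assoc, hxy]

theorem le_antisymm {x y : S} (hxy : A.le x y) (hyx : A.le y x) : x = y := by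
  unfold IdemSemigroup.le at *
  rw [← hyx, A.add_comm, hxy]

theorem le_self_add (x y : S) : A.le x (A.add x y) := by
  unfold IdemSemigroup.le
  rw [← A.add_assoc, A.add_idem]

theorem le_add_self (x y : S) : A.le y (A.add x y) := by
  rw [A.add_comm]
  exact le_self_add y x

theorem add_le {x y z : S} (hxz : A.le x z) (hyz : A.le y z) : A.le (A.add x y) z := by
  unfold IdemSemigroup.le at *
  rw [A.add_assoc, hyz, hxz]

variable (A) in
abbrev toPartialOrder : PartialOrder S where
  le := A.le
  le_refl := A.le_refl
  le_trans _ _ _ := le_trans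
  le_antisymm _ _ := le_antisymm

theorem chain_of_isChain {c : Set S} (hc : IsChain A.le c) : A.Chain c := by
  intro x hx y hy
  rcases eq_or_ne x y with rfl | hxy
  · exact Or.inl (A.le_refl x)
  · exact hc hx hy hxy

theorem exists_maximal_le (hA : A.BComplete) {W : Set S}
    (hW : ∀ X ⊆ W, A.Chain X → ∀ s, A.IsSup X s → s ∈ W) (s : S) :
    ∃ m ∈ W, A.le m s ∧ ∀ w ∈ W, A.le w s → A.le m w → A.le w m := by
  let _ := A.toPartialOrder
  obtain ⟨m, ⟨hmW, hms⟩, hmax⟩ := zorn_le₀ {w | w ∈ W ∧ A.le w s} fun c hc hchain => by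
    have hcs : A.UB c s := fun x hx => (hc hx).2
    obtain ⟨t, ht⟩ := hA c ⟨s, hcs⟩
    exact ⟨t, ⟨hW c (fun x hx => (hc hx).1) (chain_of_isChain hchain) t ht, ht.2 s hcs⟩, ht.1⟩
  exact ⟨m, hmW, hms, fun w hwW hws hmw => hmax ⟨hwW, hws⟩ hmw⟩

theorem isSup_mem_of_chain_closed (hA : A.BComplete) {W : Set S}
    (hW : ∀ X ⊆ W, A.Chain X → ∀ s, A.IsSup X s → s ∈ W)
    (hadd : ∀ x ∈ W, ∀ y ∈ W, A.add x y ∈ W) {X : Set S} (hXW : X ⊆ W) {s : S}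
    (hs : A.IsSup X s) : s ∈ W := by
  obtain ⟨m, hmW, hms, hmax⟩ := exists_maximal_le hA hW s
  have hXm : A.UB X m := fun x hx =>
    le_trans (le_add_self m x)
      (hmax _ (hadd m hmW x (hXW hx)) (add_le hms (hs.1 x hx)) (le_self_add m x))
  rwa [le_antisymm (hs.2 m hXm) hms]

end IdemSemigroup

theorem IdemBSpace.WOClosed.isSup_mem {K V : Type*} {F : IdemSemifield K}
    {B : IdemBSpace F V} {W : Set V} (hW : B.WOClosed W)
    (hadd : ∀ x ∈ W, ∀ y ∈ W, B.add x y ∈ W) {X : Set V} (hXW : X ⊆ W) {s : V}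
    (hs : B.IsSup X s) : s ∈ W :=
  IdemSemigroup.isSup_mem_of_chain_closed B.bcomplete (fun Y hYW hY => (hW Y hYW hY).1) hadd
    hXW hs

theorem stmt6_general {K V : Type*} (F : IdemSemifield K)
    (B : IdemBSpace F V) (W : Set V) (hW : B.WOClosed W)
    (hsub : ∀ x ∈ W, ∀ y ∈ W, B.add x y ∈ W) :
    (∀ X ⊆ W, ∀ s, B.IsSup X s → s ∈ W) ∧
    (∀ W' : Set V, B.Subspace W' → B.WOClosed W' →
      ∀ X ⊆ W', ∀ s, B.IsSup X s → s ∈ W') :=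
  ⟨fun _ hXW _ hs => hW.isSup_mem hsub hXW hs,
    fun _ hW'sub hW' _ hXW _ hs => hW'.isSup_mem hW'sub.1 hXW hs⟩

/-- Sups (in V) of subsets of a wo-closed subsemigroup of a b-space lie in the
subsemigroup; in particular every wo-closed subspace is b-closed. -/
theorem stmt6 {K V : Type*} (F : IdemSemifield K) (hF : F.BComplete)
    (B : IdemBSpace F V) (W : Set V) (hW : B.WOClosed W)
    (hsub : ∀ x ∈ W, ∀ y ∈ W, B.add x y ∈ W) :
    (∀ X ⊆ W, ∀ s, B.IsSup X s → s ∈ W) ∧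
    (∀ W' : Set V, B.Subspace W' → B.WOClosed W' →
      ∀ X ⊆ W', ∀ s, B.IsSup X s → s ∈ W') :=
  stmt6_general F B W hW hsub
end

section
/- Any wo-closed subspace of an Archimedean idempotent b-space is itself an Archimedean space. -/
/-
Let `x₀` be a wo-continuous Archimedean element of `V` and let `σ` be the supremum of the
elements of `W` below `x₀`. Since suprema of chains in `W` stay in `W`, Zorn gives a maximal
`m ∈ W` below `σ`; as `m ⊕ y ∈ W` for `y ∈ W`, maximality makes `m` an upper bound, so `σ = m ∈ W`.
Since `W` is stable under scalars and nonzero scalars are invertible, an element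
`y ∈ W` satisfies `y ≼ k ⊙ x₀` iff `k⁻¹ ⊙ y ≼ σ`, i.e. iff `y ≼ k ⊙ σ`. Hence `σ*` and `x₀*`
agree on `W`, and `σ` inherits both the Archimedean property and wo-continuity from `x₀`.
-/

namespace IdemBSpace

variable {K V : Type*} {F : IdemSemifield K} (B : IdemBSpace F V)

lemma le_refl (x : V) : B.le x x := B.add_idem x

lemma le_trans {x y z : V} (hxy : B.le x y) (hyz : B.le y z) : B.le x z := by
  simp only [IdemBSpace.le, IdemSemigroup.le] at *
  rw [← hyz, ← B.add_assoc, hxy]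

lemma le_antisymm {x y : V} (hxy : B.le x y) (hyx : B.le y x) : x = y := by
  simp only [IdemBSpace.le, IdemSemigroup.le] at *
  rw [← hyx, B.add_comm, hxy]

lemma le_self_add (x y : V) : B.le x (B.add x y) := by
  show B.add x (B.add x y) = B.add x y
  rw [← B.add_assoc, B.add_idem]

lemma le_add_self (x y : V) : B.le y (B.add x y) := by
  rw [B.add_comm]
  exact B.le_self_add y x

lemma add_le {x y z : V} (hxz : B.le x z) (hyz : B.le y z) : B.le (B.add x y) z := by
  show B.add (B.add x y) z = z
  rw [B.add_assoc, hyz, hxz]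

lemma smul_le_smul (k : K) {x y : V} (h : B.le x y) : B.le (B.smul k x) (B.smul k y) := by
  simp only [IdemBSpace.le, IdemSemigroup.le] at *
  rw [← B.smul_add, h]

lemma le_smul_iff_inv_smul_le {k k' : K} (hk : F.mul k k' = F.one) (hk' : F.mul k' k = F.one)
    (x y : V) : B.le y (B.smul k x) ↔ B.le (B.smul k' y) x := by
  constructor
  · intro h
    simpa only [B.smul_smul, hk', B.one_smul] using B.smul_le_smul k' h
  · intro h
    simpa only [B.smul_smul, hk, B.one_smul] using B.smul_le_smul k h

lemma exists_maximal_of_woClosed {W : Set V} (hwo : B.WOClosed W) (σ : V) :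
    ∃ m ∈ W, B.le m σ ∧ ∀ z ∈ W, B.le z σ → B.le m z → B.le z m := by
  let _ : Preorder V :=
    { le := B.le
      le_refl := B.le_refl
      le_trans := fun _ _ _ => B.le_trans }
  obtain ⟨m, ⟨hmW, hmσ⟩, hmax⟩ : ∃ m, Maximal (· ∈ {z | z ∈ W ∧ B.le z σ}) m := by
    refine zorn_le₀ _ fun c hcZ hc => ?_
    have hchain : B.Chain c := fun x hx y hy =>
      (eq_or_ne x y).elim (fun hxy => Or.inl (hxy ▸ B.le_refl x)) (hc hx hy)
    obtain ⟨t, ht⟩ := B.bcomplete c ⟨σ, fun x hx => (hcZ hx).2⟩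
    exact ⟨t, ⟨(hwo c (fun x hx => (hcZ hx).1) hchain).1 t ht,
      ht.2 σ fun x hx => (hcZ hx).2⟩, ht.1⟩
  exact ⟨m, hmW, hmσ, fun z hzW hzσ hmz => hmax ⟨hzW, hzσ⟩ hmz⟩

lemma isSup_mem_of_woClosed {W : Set V} (hsub : B.Subspace W) (hwo : B.WOClosed W)
    {S : Set V} (hS : S ⊆ W) {σ : V} (hσ : B.IsSup S σ) : σ ∈ W := by
  obtain ⟨m, hmW, hmσ, hmax⟩ := B.exists_maximal_of_woClosed hwo σ
  have hub : B.toIdemSemigroup.UB S m := fun y hy =>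
    B.le_trans (B.le_add_self m y)
      (hmax _ (hsub.1 m hmW y (hS hy)) (B.add_le hmσ (hσ.1 y hy)) (B.le_self_add m y))
  exact B.le_antisymm (hσ.2 m hub) hmσ ▸ hmW

lemma le_smul_isSup_iff {W : Set V} (hW : ∀ (a : K), ∀ y ∈ W, B.smul a y ∈ W) {x σ : V}
    (hσ : B.IsSup {y | y ∈ W ∧ B.le y x} σ) {y : V} (hy : y ∈ W) (k : K) :
    B.le y (B.smul k σ) ↔ B.le y (B.smul k x) := by
  have hσx : B.le σ x := hσ.2 x fun z hz => hz.2
  refine ⟨fun h => B.le_trans h (B.smul_le_smul k hσx), fun h => ?_⟩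
  by_cases hk : k = F.zero
  · subst hk
    rwa [B.zero_smul] at h ⊢
  obtain ⟨k', hk1, hk2⟩ := F.inv_exists k hk
  rw [B.le_smul_iff_inv_smul_le hk1 hk2] at h ⊢
  exact hσ.1 _ ⟨hW k' y hy, h⟩

end IdemBSpace

theorem stmt9_general {K V : Type*} (F : IdemSemifield K)
    (B : IdemBSpace F V) (hA : B.ArchSpace)
    (W : Set V) (hsub : B.Subspace W) (hwo : B.WOClosed W) :
    B.ArchOn W := by
  obtain ⟨x₀, harch, f₀, hstar, hcont⟩ := hA
  obtain ⟨σ, hσ⟩ := B.bcomplete {y | y ∈ W ∧ B.le y x₀} ⟨x₀, fun y hy => hy.2⟩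
  have hσW : σ ∈ W := B.isSup_mem_of_woClosed hsub hwo (fun y hy => hy.1) hσ
  have hsets : ∀ y ∈ W, {k | B.le y (B.smul k σ)} = {k | B.le y (B.smul k x₀)} :=
    fun y hy => Set.ext (B.le_smul_isSup_iff hsub.2 hσ hy)
  refine ⟨σ, hσW, fun y hy => ?_, f₀, fun y hy => hsets y hy ▸ hstar y,
    fun X _ hX s _ => hcont.1 X hX s, fun X _ hX hne s _ => hcont.2 X hX hne s⟩
  obtain ⟨a, ha⟩ := harch y
  exact ⟨a, (B.le_smul_isSup_iff hsub.2 hσ hy a).2 ha⟩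

/-- Any wo-closed subspace of an Archimedean idempotent b-space is Archimedean. -/
theorem stmt9 {K V : Type*} (F : IdemSemifield K) (hF : F.BComplete)
    (B : IdemBSpace F V) (hA : B.ArchSpace)
    (W : Set V) (hsub : B.Subspace W) (hwo : B.WOClosed W) :
    B.ArchOn W :=
  stmt9_general F B hA W hsub hwo
end

section
/- If V is a boundedly complete lattice and X a topological space, then USC(X, V), the set of bounded upper semicontinuous maps X → V, is a boundedly complete lattice with respect to the pointwise order. -/
section BoundedUSC

variable {X V : Type*}

theorem exists_isGLB_of_forall_exists_isLUB [Preorder V]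
    (hV : ∀ S : Set V, S.Nonempty → BddAbove S → ∃ s, IsLUB S s)
    {T : Set V} (hne : T.Nonempty) (hbdd : BddBelow T) : ∃ s, IsGLB T s :=
  let ⟨s, hs⟩ := hV (lowerBounds T) hbdd hne.bddAbove_lowerBounds
  ⟨s, isLUB_lowerBounds.mp hs⟩

theorem Pi.forall_exists_isLUB [Preorder V]
    (hV : ∀ S : Set V, S.Nonempty → BddAbove S → ∃ s, IsLUB S s) :
    ∀ S : Set (X → V), S.Nonempty → BddAbove S → ∃ s, IsLUB S s := by
  intro S hne hbdd
  choose s hs using fun t => hV (Function.eval t '' S) (hne.image _) (bddAbove_pi.mp hbdd t)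
  exact ⟨s, isLUB_pi.mpr hs⟩

variable [TopologicalSpace X]

/-- Upper semicontinuity in the sense of the paper; it agrees with Mathlib's `UpperSemicontinuous`
for linearly ordered `V`, but not in general. -/
def ClosedSuperlevelSets [Preorder V] (f : X → V) : Prop :=
  ∀ b, IsClosed {t | b ≤ f t}

theorem ClosedSuperlevelSets.of_isGLB [Preorder V] {H : Set (X → V)}
    (hH : ∀ h ∈ H, ClosedSuperlevelSets h) {s : X → V} (hs : IsGLB H s) :
    ClosedSuperlevelSets s := by
  intro b
  have hsuper : {t | b ≤ s t} = ⋂ h ∈ H, {t | b ≤ h t} := by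
    ext t
    simp [le_isGLB_iff (isGLB_pi.mp hs t), mem_lowerBounds]
  rw [hsuper]
  exact isClosed_biInter fun h hh => hH h hh b

variable (X V) in
abbrev BddUSC [Preorder V] : Type _ :=
  {f : X → V // (∃ b, ∀ t, f t ≤ b) ∧ ClosedSuperlevelSets f}

namespace BddUSC

def const [Preorder V] (v : V) : BddUSC X V :=
  ⟨fun _ => v, ⟨v, fun _ => le_rfl⟩, fun _ => isClosed_const⟩

/-- The least upper bound of `S` is the pointwise infimum of its upper bounds: the pointwise
supremum of `S` need not have closed superlevel sets. -/
theorem exists_isLUB_of_bddAbove [Preorder V]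
    (hV : ∀ S : Set V, S.Nonempty → BddAbove S → ∃ s, IsLUB S s)
    {S : Set (BddUSC X V)} (hne : S.Nonempty) (hbdd : BddAbove S) : ∃ s, IsLUB S s := by
  obtain ⟨u, hu⟩ := hbdd
  obtain ⟨f₀, hf₀⟩ := hne
  obtain ⟨s, hs⟩ : ∃ s, IsGLB (Subtype.val '' upperBounds S) s :=
    exists_isGLB_of_forall_exists_isLUB (Pi.forall_exists_isLUB hV) ⟨u.1, u, hu, rfl⟩
      ⟨f₀.1, (Subtype.mono_coe _).mem_lowerBounds_image (subset_lowerBounds_upperBounds S hf₀)⟩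
  have hs_bdd : ∃ b, ∀ t, s t ≤ b := by
    obtain ⟨b, hb⟩ := u.2.1
    exact ⟨b, fun t => (hs.1 ⟨u, hu, rfl⟩ t).trans (hb t)⟩
  have hs_usc : ClosedSuperlevelSets s :=
    ClosedSuperlevelSets.of_isGLB (by rintro _ ⟨h, -, rfl⟩; exact h.2.2) hs
  exact ⟨⟨s, hs_bdd, hs_usc⟩,
    isGLB_upperBounds.mp (IsGLB.of_image (f := Subtype.val) Iff.rfl hs)⟩

theorem exists_isLUB_pair [SemilatticeSup V]
    (hV : ∀ S : Set V, S.Nonempty → BddAbove S → ∃ s, IsLUB S s) (f g : BddUSC X V) :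
    ∃ s, IsLUB {f, g} s := by
  obtain ⟨bf, hbf⟩ := f.2.1
  obtain ⟨bg, hbg⟩ := g.2.1
  refine exists_isLUB_of_bddAbove hV (Set.insert_nonempty f {g}) ⟨const (bf ⊔ bg), ?_⟩
  rintro _ (rfl | rfl)
  exacts [fun t => (hbf t).trans le_sup_left, fun t => (hbg t).trans le_sup_right]

def inf [SemilatticeInf V] (f g : BddUSC X V) : BddUSC X V :=
  ⟨f.1 ⊓ g.1,
    let ⟨b, hb⟩ := f.2.1; ⟨b, fun t => inf_le_left.trans (hb t)⟩,
    ClosedSuperlevelSets.of_isGLB (by rintro _ (rfl | rfl); exacts [f.2.2, g.2.2])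
      (isGLB_pair (a := f.1) (b := g.1))⟩

theorem isGLB_pair_inf [SemilatticeInf V] (f g : BddUSC X V) : IsGLB {f, g} (f.inf g) :=
  IsGLB.of_image (f := Subtype.val) Iff.rfl (by rw [Set.image_pair]; exact isGLB_pair)

end BddUSC

end BoundedUSC

/-- Bounded upper semicontinuous maps into a boundedly complete lattice form a
boundedly complete lattice under the pointwise order. -/
theorem stmt19 {V : Type*} [Lattice V]
    (hV : ∀ S : Set V, S.Nonempty → BddAbove S → ∃ s, IsLUB S s)
    (X : Type*) [TopologicalSpace X] :
    (∀ f g : {f : X → V // (∃ b, ∀ t, f t ≤ b) ∧ ∀ b, IsClosed {t | b ≤ f t}},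
      ∃ s, IsLUB {f, g} s) ∧
    (∀ f g : {f : X → V // (∃ b, ∀ t, f t ≤ b) ∧ ∀ b, IsClosed {t | b ≤ f t}},
      ∃ i, IsGLB {f, g} i) ∧
    (∀ S : Set {f : X → V // (∃ b, ∀ t, f t ≤ b) ∧ ∀ b, IsClosed {t | b ≤ f t}},
      S.Nonempty → BddAbove S → ∃ s, IsLUB S s) :=
  ⟨BddUSC.exists_isLUB_pair hV, fun f g => ⟨BddUSC.inf f g, BddUSC.isGLB_pair_inf f g⟩,
    fun _ => BddUSC.exists_isLUB_of_bddAbove hV⟩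
end
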